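/- arXiv:1810.11767 — 2 statements merged into one kernel-verified Lean document; each statement's English description precedes it below -/
import Mathlib

section
/- Under Assumption 2, if a continuous function u : ℝⁿ → ℝ satisfies the relaxed constraints, then {x ∈ B(0, R) : u(x) < 1} is a robust region of attraction, i.e., {x ∈ B(0, R) : u(x) < 1} ⊆ R. -/
open Metric Set Filter MeasureTheory

noncomputable section

abbrev St (n : ℕ) := EuclideanSpace ℝ (Fin n)

/-- Trajectory of the perturbed discrete-time system. -/
def traj {n m : ℕ} (f : St n → St m → St n) (x₀ : St n) (π : ℕ → St m) : ℕ → St n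
  | 0 => x₀
  | k + 1 => f (traj f x₀ π k) (π k)

/-- A perturbation input policy takes values in `D`. -/
def IsPolicy {m : ℕ} (D : Set (St m)) (π : ℕ → St m) : Prop := ∀ k, π k ∈ D

/-- Maximal robust region of attraction. -/
def RoA {n m : ℕ} (f : St n → St m → St n) (D : Set (St m)) (X : Set (St n)) : Set (St n) :=
  {x₀ | ∀ π, IsPolicy D π →
    (∀ k, traj f x₀ π k ∈ X) ∧ Tendsto (fun k => traj f x₀ π k) atTop (nhds 0)}

/-- `f` is a polynomial map in `(x, d)`. -/
def IsPolyMap2 {n m : ℕ} (f : St n → St m → St n) : Prop :=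
  ∃ p : Fin n → MvPolynomial (Fin n ⊕ Fin m) ℝ,
    ∀ x d i, f x d i = MvPolynomial.eval (Sum.elim x d) (p i)

/-- A real-valued polynomial function on the state space. -/
def IsPolyFun {n : ℕ} (g : St n → ℝ) : Prop :=
  ∃ p : MvPolynomial (Fin n) ℝ, ∀ x, g x = MvPolynomial.eval x p

/-- Assumption 1: uniform local exponential stability. -/
def Assumption1 {n m : ℕ} (f : St n → St m → St n) (D : Set (St m)) (X : Set (St n)) : Prop :=
  ∃ M r lam : ℝ, 0 < M ∧ 0 < r ∧ 0 < lam ∧ lam < 1 ∧ closedBall (0 : St n) r ⊆ X ∧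
    ∀ x₀ ∈ closedBall (0 : St n) r, ∀ π, IsPolicy D π →
      ∀ k, ‖traj f x₀ π k‖ ≤ lam ^ k * M * ‖x₀‖

/-- Maximal robust region of uniform attraction (with ball radius `ε`). -/
def R0 {n m : ℕ} (f : St n → St m → St n) (D : Set (St m)) (X : Set (St n)) (ε : ℝ) :
    Set (St n) :=
  {x₀ | (∃ δ > 0, ∀ π, IsPolicy D π → ∀ k, δ < infDist (traj f x₀ π k) Xᶜ) ∧
        (∃ K : ℕ, ∀ π, IsPolicy D π →
            ∃ k, 0 < k ∧ k ≤ K ∧ traj f x₀ π k ∈ closedBall (0 : St n) ε)}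

/-- Extended-real logarithm with the convention `ln 0 = -∞`. -/
def elog (t : ℝ) : EReal := if t = 0 then ⊥ else (Real.log t : EReal)

/-- The value function `V`. -/
def Vval {n m nX : ℕ} (f : St n → St m → St n) (D : Set (St m))
    (hX : Fin nX → St n → ℝ) (g : St n → ℝ) (x : St n) : EReal :=
  ⨆ π ∈ {π : ℕ → St m | IsPolicy D π}, ⨆ k : ℕ,
    ((∑ i ∈ Finset.range k, Real.log (g (traj f x π i) + 1) : ℝ) : EReal)
      - ⨅ j : Fin nX, elog (max (1 - hX j (traj f x π k)) 0)

/-- The Kruzhkov transformed value function `v = 1 - e^{-V}` (with `e^{-∞} = 0`). -/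
def vval {n m nX : ℕ} (f : St n → St m → St n) (D : Set (St m))
    (hX : Fin nX → St n → ℝ) (g : St n → ℝ) (x : St n) : ℝ :=
  if Vval f D hX g x = ⊤ then 1 else 1 - Real.exp (-(Vval f D hX g x).toReal)

/-- `w` is a (bounded continuous) solution of the Bellman equation. -/
def IsBellmanSolution {n m nX : ℕ} (f : St n → St m → St n) (D : Set (St m))
    (hX : Fin nX → St n → ℝ) (g : St n → ℝ) (w : St n → ℝ) : Prop :=
  (∀ x, min (sInf {y : ℝ | ∃ d ∈ D, y = w x - w (f x d) - g x * (1 - w x)})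
            (w x - 1 + ⨅ j : Fin nX, max (1 - hX j x) 0) = 0) ∧ w 0 = 0

/-!
While the trajectory from a point of `{x ∈ B(0, R) : u x < 1}` has not entered `X∞`, condition (ii)
keeps it in `X`, so its successor lies in `B(0, R)`, and condition (i) makes `u` nonincreasing
along it: the trajectory stays in the sublevel set. On the compact set `closure (B(0, R) \ X∞)`,
which avoids `0` because `0` is interior to `X∞`, `g` is bounded below by some `δ > 0`, so there
`u` drops by at least `δ (1 - u x₀)` per step while staying bounded below. Hence the trajectory
enters `X∞` after finitely many steps, and from then on `X∞ ⊆ R` applies.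
-/

theorem IsPolyFun.continuous {n : ℕ} {g : St n → ℝ} (hg : IsPolyFun g) : Continuous g := by
  obtain ⟨p, hp⟩ := hg
  rw [show g = fun x : St n => MvPolynomial.eval x.ofLp p from funext hp]
  exact (MvPolynomial.continuous_eval p).comp (PiLp.continuous_ofLp 2 _)

theorem isBounded_setOf_norm_sq_le {E : Type*} [SeminormedAddCommGroup E] (R : ℝ) :
    Bornology.IsBounded {x : E | ‖x‖ ^ 2 ≤ R} :=
  (isBounded_closedBall (x := 0) (r := √R)).subset fun x hx => by
    simpa using Real.abs_le_sqrt hx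

theorem notMem_closure_diff_of_mem_interior {α : Type*} [TopologicalSpace α] {x : α}
    {s t : Set α} (hx : x ∈ interior s) : x ∉ closure (t \ s) := fun h => by
  have : x ∈ closure sᶜ := closure_mono (fun _ hy => hy.2) h
  rw [closure_compl] at this
  exact this hx

theorem IsCompact.not_forall_mem_of_strict_decrease {α : Type*} [TopologicalSpace α]
    {K : Set α} (hK : IsCompact K) {V w : α → ℝ} (hV : ContinuousOn V K)
    (hw : ContinuousOn w K) (hwpos : ∀ x ∈ K, 0 < w x) {T : ℕ → α}
    (hdec : ∀ k, V (T (k + 1)) ≤ V (T k) - w (T k)) : ¬ ∀ k, T k ∈ K := by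
  intro hT
  obtain ⟨z, hzK, hz⟩ := hK.exists_isMinOn ⟨_, hT 0⟩ hw
  obtain ⟨y, -, hy⟩ := hK.exists_isMinOn ⟨_, hT 0⟩ hV
  have hdrop : ∀ k : ℕ, V (T k) ≤ V (T 0) - k * w z := by
    intro k
    induction k with
    | zero => simp
    | succ k ih =>
      have := hdec k
      have := isMinOn_iff.mp hz _ (hT k)
      push_cast
      linarith
  obtain ⟨N, hN⟩ := exists_nat_gt ((V (T 0) - V y) / w z)
  rw [div_lt_iff₀ (hwpos z hzK)] at hN
  linarith [hdrop N, isMinOn_iff.mp hy _ (hT N)]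

section Trajectory

variable {n m : ℕ} {f : St n → St m → St n} {D : Set (St m)}

theorem traj_add (f : St n → St m → St n) (x₀ : St n) (π : ℕ → St m) (k i : ℕ) :
    traj f x₀ π (k + i) = traj f (traj f x₀ π k) (fun j => π (k + j)) i := by
  induction i with
  | zero => rfl
  | succ i ih => exact congrArg (f · (π (k + i))) ih

theorem IsPolicy.shift {π : ℕ → St m} (hπ : IsPolicy D π) (k : ℕ) :
    IsPolicy D fun j => π (k + j) :=
  fun j => hπ (k + j)

theorem mem_RoA_of_reach {X : Set (St n)} {x₀ : St n}
    (h : ∀ π, IsPolicy D π →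
      ∃ k₀, (∀ i < k₀, traj f x₀ π i ∈ X) ∧ traj f x₀ π k₀ ∈ RoA f D X) :
    x₀ ∈ RoA f D X := by
  intro π hπ
  obtain ⟨k₀, hpre, hk₀⟩ := h π hπ
  obtain ⟨hX, hlim⟩ := hk₀ _ (hπ.shift k₀)
  refine ⟨fun k => ?_, ?_⟩
  · rcases lt_or_ge k k₀ with hk | hk
    · exact hpre k hk
    · obtain ⟨i, rfl⟩ := Nat.exists_eq_add_of_le hk
      exact traj_add f x₀ π k₀ i ▸ hX i
  · refine (tendsto_add_atTop_iff_nat k₀).mp ?_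
    simp_rw [Nat.add_comm _ k₀, traj_add f x₀ π k₀]
    exact hlim

end Trajectory

section Lyapunov

variable {n m : ℕ} {f : St n → St m → St n} {D : Set (St m)} {X B Xinf : Set (St n)}
  {u g : St n → ℝ}

theorem traj_mem_and_le_of_forall_lt_notMem (hfB : ∀ x ∈ X, ∀ d ∈ D, f x d ∈ B)
    (hBX : ∀ x ∈ B, u x < 1 → x ∈ X)
    (hdec : ∀ x ∈ B \ Xinf, ∀ d ∈ D, g x * (1 - u x) ≤ u x - u (f x d))
    (hgnn : ∀ x, 0 ≤ g x) {x₀ : St n} (hx₀ : x₀ ∈ B) (hux₀ : u x₀ < 1)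
    {π : ℕ → St m} (hπ : IsPolicy D π) :
    ∀ k, (∀ i < k, traj f x₀ π i ∉ Xinf) →
      traj f x₀ π k ∈ B ∧ u (traj f x₀ π k) ≤ u x₀ := by
  intro k
  induction k with
  | zero => exact fun _ => ⟨hx₀, le_rfl⟩
  | succ k ih =>
    intro hout
    obtain ⟨hkB, hku⟩ := ih fun i hi => hout i (Nat.lt_succ_of_lt hi)
    have hkX := hBX _ hkB (hku.trans_lt hux₀)
    have hstep := hdec _ ⟨hkB, hout k k.lt_succ_self⟩ (π k) (hπ k)
    have : 0 ≤ g (traj f x₀ π k) * (1 - u (traj f x₀ π k)) :=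
      mul_nonneg (hgnn _) (by linarith)
    exact ⟨hfB _ hkX _ (hπ k), by simp only [traj]; linarith⟩

theorem exists_traj_mem_of_lyapunov (hfB : ∀ x ∈ X, ∀ d ∈ D, f x d ∈ B)
    (hBX : ∀ x ∈ B, u x < 1 → x ∈ X)
    (hdec : ∀ x ∈ B \ Xinf, ∀ d ∈ D, g x * (1 - u x) ≤ u x - u (f x d))
    (hgnn : ∀ x, 0 ≤ g x) (hgzero : ∀ x, g x = 0 ↔ x = 0) (hB : Bornology.IsBounded B)
    (hXinf0 : (0 : St n) ∈ interior Xinf) (hu : Continuous u) (hg : Continuous g)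
    {x₀ : St n} (hx₀ : x₀ ∈ B) (hux₀ : u x₀ < 1) {π : ℕ → St m} (hπ : IsPolicy D π) :
    ∃ k, traj f x₀ π k ∈ Xinf := by
  by_contra! hout
  have hstay k := traj_mem_and_le_of_forall_lt_notMem hfB hBX hdec hgnn hx₀ hux₀ hπ k
    fun i _ => hout i
  refine (hB.subset sdiff_subset).isCompact_closure.not_forall_mem_of_strict_decrease
    hu.continuousOn (w := fun x => g x * (1 - u x₀)) (by fun_prop) (fun x hx => ?_)
    (T := traj f x₀ π) (fun k => ?_) fun k => subset_closure ⟨(hstay k).1, hout k⟩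
  · have hx0 : x ≠ 0 := fun h => notMem_closure_diff_of_mem_interior hXinf0 (h ▸ hx)
    exact mul_pos ((hgnn x).lt_of_ne fun h => hx0 ((hgzero x).mp h.symm)) (by linarith)
  · obtain ⟨hkB, hku⟩ := hstay k
    have := hdec _ ⟨hkB, hout k⟩ (π k) (hπ k)
    have : g (traj f x₀ π k) * (1 - u x₀) ≤ g (traj f x₀ π k) * (1 - u (traj f x₀ π k)) :=
      mul_le_mul_of_nonneg_left (by linarith) (hgnn _)
    simp only [traj]
    linarith

end Lyapunov

theorem stmt2_general
    {n m : ℕ}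
    (f : St n → St m → St n)
    (D : Set (St m))
    (X : Set (St n))
    (g : St n → ℝ) (hgpoly : IsPolyFun g) (hgnn : ∀ x, 0 ≤ g x)
    (hgzero : ∀ x : St n, g x = 0 ↔ x = 0)
    (R : ℝ)
    (hOmegaX : {y | ∃ x₀ ∈ X, ∃ d ∈ D, y = f x₀ d} ∪ X ⊆ {x : St n | ‖x‖ ^ 2 ≤ R})
    (Xinf : Set (St n))
    (hXinfRoA : Xinf ⊆ RoA f D X) (hXinf0 : (0 : St n) ∈ interior Xinf)
    (u : St n → ℝ) (hucont : Continuous u)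
    (hu1 : ∀ x ∈ closure ({x : St n | ‖x‖ ^ 2 ≤ R} \ Xinf), ∀ d ∈ D,
      0 ≤ u x - u (f x d) - g x * (1 - u x))
    (hu2 : ∀ x ∈ {x : St n | ‖x‖ ^ 2 ≤ R} \ X, 0 ≤ u x - 1)
    :
    {x : St n | ‖x‖ ^ 2 ≤ R ∧ u x < 1} ⊆ RoA f D X := by
  have hfB : ∀ x ∈ X, ∀ d ∈ D, ‖f x d‖ ^ 2 ≤ R :=
    fun x hx d hd => hOmegaX (Or.inl ⟨x, hx, d, hd, rfl⟩)
  have hBX : ∀ x, ‖x‖ ^ 2 ≤ R → u x < 1 → x ∈ X := fun x hxB hux =>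
    by_contra fun hxX => (hu2 x ⟨hxB, hxX⟩).not_gt (by linarith)
  have hdec : ∀ x ∈ {x : St n | ‖x‖ ^ 2 ≤ R} \ Xinf, ∀ d ∈ D,
      g x * (1 - u x) ≤ u x - u (f x d) :=
    fun x hx d hd => by linarith [hu1 x (subset_closure hx) d hd]
  rintro x₀ ⟨hx₀, hux₀⟩
  refine mem_RoA_of_reach fun π hπ => ?_
  classical
  have hentry := exists_traj_mem_of_lyapunov hfB hBX hdec hgnn hgzero
    (isBounded_setOf_norm_sq_le R) hXinf0 hucont hgpoly.continuous hx₀ hux₀ hπ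
  refine ⟨Nat.find hentry, fun i hi => ?_, hXinfRoA (Nat.find_spec hentry)⟩
  obtain ⟨hiB, hiu⟩ := traj_mem_and_le_of_forall_lt_notMem hfB hBX hdec hgnn hx₀ hux₀ hπ i
    fun j hj => Nat.find_min hentry (hj.trans hi)
  exact hBX _ hiB (hiu.trans_lt hux₀)

theorem stmt2
    {n m nX : ℕ} (hnX : 0 < nX)
    (f : St n → St m → St n) (hfpoly : IsPolyMap2 f)
    (D : Set (St m)) (hD : IsCompact D)
    (hf0 : ∀ d ∈ D, f 0 d = 0)
    (hX : Fin nX → St n → ℝ) (hXpoly : ∀ j, IsPolyFun (hX j))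
    (hX0 : ∀ j, hX j 0 = 0) (hXpos : ∀ j, ∀ x : St n, x ≠ 0 → 0 < hX j x)
    (X : Set (St n)) (hXdef : X = {x | ∀ j, hX j x < 1})
    (hXbdd : Bornology.IsBounded X) (hXopen : IsOpen X)
    (g : St n → ℝ) (hgpoly : IsPolyFun g) (hgnn : ∀ x, 0 ≤ g x)
    (hgzero : ∀ x : St n, g x = 0 ↔ x = 0)
    (R : ℝ) (hR : 0 < R)
    (hOmegaX : {y | ∃ x₀ ∈ X, ∃ d ∈ D, y = f x₀ d} ∪ X ⊆ {x : St n | ‖x‖ ^ 2 ≤ R})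
    (hinf : St n → ℝ) (hinfpoly : IsPolyFun hinf)
    (Xinf : Set (St n)) (hXinfdef : Xinf = {x | hinf x < 1})
    (hXinfRoA : Xinf ⊆ RoA f D X) (hXinf0 : (0 : St n) ∈ interior Xinf)
    (u : St n → ℝ) (hucont : Continuous u)
    (hu1 : ∀ x ∈ closure ({x : St n | ‖x‖ ^ 2 ≤ R} \ Xinf), ∀ d ∈ D,
      0 ≤ u x - u (f x d) - g x * (1 - u x))
    (hu2 : ∀ x ∈ {x : St n | ‖x‖ ^ 2 ≤ R} \ X, 0 ≤ u x - 1)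
    (hu3 : ∀ x ∈ closure X, ∀ j, 0 ≤ u x - hX j x)
    :
    {x : St n | ‖x‖ ^ 2 ≤ R ∧ u x < 1} ⊆ RoA f D X :=
  stmt2_general f D X g hgpoly hgnn hgzero R hOmegaX Xinf hXinfRoA hXinf0 u hucont hu1 hu2
end
end

section
/- Under Assumption 2, if a continuous function u : ℝⁿ → ℝ satisfies the relaxed constraints, then for every x₀ ∈ B(0, R) with u(x₀) < 1 and every perturbation input policy π, there exists k ∈ ℕ such that φ_{x₀}^π(k) ∈ X∞; i.e., every trajectory starting in {x ∈ B(0, R) : u(x) < 1} enters the set X∞ in finite time. -/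
open Metric Set Filter MeasureTheory

noncomputable section

theorem isCompact_setOf_norm_sq_le {E : Type*} [NormedAddCommGroup E] [ProperSpace E] (R : ℝ) :
    IsCompact {x : E | ‖x‖ ^ 2 ≤ R} := by
  refine isCompact_of_isClosed_isBounded (isClosed_le (continuous_norm.pow 2) continuous_const) ?_
  refine (isBounded_closedBall (x := (0 : E)) (r := √R)).subset fun x hx => ?_
  rw [mem_closedBall_zero_iff, ← Real.sqrt_sq (norm_nonneg x)]
  exact Real.sqrt_le_sqrt hx

theorem IsCompact.exists_pos_forall_le {β : Type*} [TopologicalSpace β] {K : Set β} {g : β → ℝ}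
    (hK : IsCompact K) (hg : ContinuousOn g K) (hpos : ∀ x ∈ K, 0 < g x) :
    ∃ ε > 0, ∀ x ∈ K, ε ≤ g x := by
  rcases K.eq_empty_or_nonempty with rfl | hne
  · exact ⟨1, one_pos, by simp⟩
  · obtain ⟨z, hz, hmin⟩ := hK.exists_isMinOn hne hg
    exact ⟨g z, hpos z hz, hmin⟩

theorem not_bddBelow_range_of_le_sub_mul {v : ℕ → ℝ} {a c : ℝ} (hc : 0 < c)
    (hv : ∀ k : ℕ, v k ≤ a - k * c) : ¬ BddBelow (range v) := by
  rintro ⟨M, hM⟩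
  obtain ⟨N, hN⟩ := exists_nat_gt ((a - M) / c)
  have hMN : M ≤ v N := hM ⟨N, rfl⟩
  rw [div_lt_iff₀ hc] at hN
  linarith [hv N]

theorem traj_mem_and_le_sub_mul {n m : ℕ} {f : St n → St m → St n} {D : Set (St m)}
    {B X Xinf : Set (St n)} {g u : St n → ℝ} {ε : ℝ} {x₀ : St n} {π : ℕ → St m}
    (hfB : ∀ x ∈ X, ∀ d ∈ D, f x d ∈ B)
    (hdec : ∀ x ∈ B \ Xinf, ∀ d ∈ D, 0 ≤ u x - u (f x d) - g x * (1 - u x))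
    (hBX : ∀ x ∈ B, u x < 1 → x ∈ X) (hε : 0 ≤ ε) (hεg : ∀ x ∈ B \ Xinf, ε ≤ g x)
    (hπ : IsPolicy D π) (hx₀ : x₀ ∈ B) (hu₀ : u x₀ < 1) (hout : ∀ k, traj f x₀ π k ∉ Xinf) :
    ∀ k : ℕ, traj f x₀ π k ∈ B ∧ u (traj f x₀ π k) ≤ u x₀ - k * (ε * (1 - u x₀)) := by
  intro k
  induction k with
  | zero => simp [traj, hx₀]
  | succ k ih =>
    obtain ⟨hB, hu⟩ := ih
    set x := traj f x₀ π k
    have hkc : 0 ≤ k * (ε * (1 - u x₀)) := by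
      have := sub_pos.2 hu₀
      positivity
    have hgx : ε ≤ g x := hεg x ⟨hB, hout k⟩
    have hgain : ε * (1 - u x₀) ≤ g x * (1 - u x) :=
      mul_le_mul hgx (by linarith) (by linarith) (hε.trans hgx)
    refine ⟨hfB x (hBX x hB (by linarith)) (π k) (hπ k), ?_⟩
    have hstep := hdec x ⟨hB, hout k⟩ (π k) (hπ k)
    change u (f x (π k)) ≤ _
    push_cast
    linarith

theorem stmt4_general
    {n m : ℕ}
    (f : St n → St m → St n)
    (D : Set (St m))
    (X : Set (St n))
    (g : St n → ℝ) (hgpoly : IsPolyFun g) (hgnn : ∀ x, 0 ≤ g x)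
    (hgzero : ∀ x : St n, g x = 0 ↔ x = 0)
    (R : ℝ)
    (hOmegaX : {y | ∃ x₀ ∈ X, ∃ d ∈ D, y = f x₀ d} ∪ X ⊆ {x : St n | ‖x‖ ^ 2 ≤ R})
    (hinf : St n → ℝ) (hinfpoly : IsPolyFun hinf)
    (Xinf : Set (St n)) (hXinfdef : Xinf = {x | hinf x < 1})
    (hXinf0 : (0 : St n) ∈ interior Xinf)
    (u : St n → ℝ) (hucont : Continuous u)
    (hu1 : ∀ x ∈ closure ({x : St n | ‖x‖ ^ 2 ≤ R} \ Xinf), ∀ d ∈ D,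
      0 ≤ u x - u (f x d) - g x * (1 - u x))
    (hu2 : ∀ x ∈ {x : St n | ‖x‖ ^ 2 ≤ R} \ X, 0 ≤ u x - 1)
    :
    ∀ x₀ : St n, ‖x₀‖ ^ 2 ≤ R → u x₀ < 1 → ∀ π, IsPolicy D π →
      ∃ k, traj f x₀ π k ∈ Xinf := by
  intro x₀ hx₀ hu₀ π hπ
  by_contra! hout
  set B := {x : St n | ‖x‖ ^ 2 ≤ R}
  have hB : IsCompact B := isCompact_setOf_norm_sq_le R
  have hXinf : IsOpen Xinf := hXinfdef ▸ isOpen_lt hinfpoly.continuous continuous_const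
  have hgpos : ∀ x ∈ B \ Xinf, 0 < g x := fun x hx =>
    (hgnn x).lt_of_ne' fun h => hx.2 ((hgzero x).1 h ▸ interior_subset hXinf0)
  obtain ⟨ε, hε, hεg⟩ :=
    (hB.diff hXinf).exists_pos_forall_le hgpoly.continuous.continuousOn hgpos
  have hBX : ∀ x ∈ B, u x < 1 → x ∈ X := fun x hx hux =>
    by_contra fun hxX => (hux.trans_le (sub_nonneg.1 (hu2 x ⟨hx, hxX⟩))).false
  have hdesc := traj_mem_and_le_sub_mul (fun x hx d hd => hOmegaX (Or.inl ⟨x, hx, d, hd, rfl⟩))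
    (fun x hx => hu1 x (subset_closure hx)) hBX hε.le hεg hπ hx₀ hu₀ hout
  refine not_bddBelow_range_of_le_sub_mul (mul_pos hε (sub_pos.2 hu₀)) (fun k => (hdesc k).2) ?_
  exact (hB.bddBelow_image hucont.continuousOn).mono
    (range_subset_iff.2 fun k => mem_image_of_mem u (hdesc k).1)

theorem stmt4
    {n m nX : ℕ} (hnX : 0 < nX)
    (f : St n → St m → St n) (hfpoly : IsPolyMap2 f)
    (D : Set (St m)) (hD : IsCompact D)
    (hf0 : ∀ d ∈ D, f 0 d = 0)
    (hX : Fin nX → St n → ℝ) (hXpoly : ∀ j, IsPolyFun (hX j))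
    (hX0 : ∀ j, hX j 0 = 0) (hXpos : ∀ j, ∀ x : St n, x ≠ 0 → 0 < hX j x)
    (X : Set (St n)) (hXdef : X = {x | ∀ j, hX j x < 1})
    (hXbdd : Bornology.IsBounded X) (hXopen : IsOpen X)
    (g : St n → ℝ) (hgpoly : IsPolyFun g) (hgnn : ∀ x, 0 ≤ g x)
    (hgzero : ∀ x : St n, g x = 0 ↔ x = 0)
    (R : ℝ) (hR : 0 < R)
    (hOmegaX : {y | ∃ x₀ ∈ X, ∃ d ∈ D, y = f x₀ d} ∪ X ⊆ {x : St n | ‖x‖ ^ 2 ≤ R})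
    (hinf : St n → ℝ) (hinfpoly : IsPolyFun hinf)
    (Xinf : Set (St n)) (hXinfdef : Xinf = {x | hinf x < 1})
    (hXinfRoA : Xinf ⊆ RoA f D X) (hXinf0 : (0 : St n) ∈ interior Xinf)
    (u : St n → ℝ) (hucont : Continuous u)
    (hu1 : ∀ x ∈ closure ({x : St n | ‖x‖ ^ 2 ≤ R} \ Xinf), ∀ d ∈ D,
      0 ≤ u x - u (f x d) - g x * (1 - u x))
    (hu2 : ∀ x ∈ {x : St n | ‖x‖ ^ 2 ≤ R} \ X, 0 ≤ u x - 1)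
    (hu3 : ∀ x ∈ closure X, ∀ j, 0 ≤ u x - hX j x)
    :
    ∀ x₀ : St n, ‖x₀‖ ^ 2 ≤ R → u x₀ < 1 → ∀ π, IsPolicy D π →
      ∃ k, traj f x₀ π k ∈ Xinf :=
  stmt4_general f D X g hgpoly hgnn hgzero R hOmegaX hinf hinfpoly Xinf hXinfdef hXinf0 u hucont hu1
    hu2
end
end
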